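/- Let R_+ be the linear operator on gl_n(ℂ) determined by ⟨R_+(η), ζ⟩ = ⟨r_{αβ}, η⊗ζ⟩_⊗ for all ζ. Then: (i) R_+(e_{ij}) = e_{ij} for all i < j with (i,j) ≠ (α,α+1), and R_+(e_{α,α+1}) = e_{α,α+1} + e_{β,β+1}; (ii) R_+(e_{ij}) = 0 for all i > j with (i,j) ≠ (β+1,β), and R_+(e_{β+1,β}) = −e_{α+1,α}; (iii) R_+ maps every diagonal matrix to a diagonal matrix, and R_+(Id) = 0. In particular R_+(η) equals the strictly upper triangular part of η plus a diagonal matrix depending linearly only on the diagonal of η, plus η_{α,α+1}·e_{β,β+1} − η_{β+1,β}·e_{α+1,α}. -/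

import Mathlib

open scoped BigOperators

noncomputable section

/-- The space of `n × n` complex matrices. -/
abbrev Mat (n : ℕ) := Matrix (Fin n) (Fin n) ℂ

/-- Polynomial functions on the space of `n × n` complex matrices. -/
abbrev PolyFn (n : ℕ) := MvPolynomial (Fin n × Fin n) ℂ

/-- The index of `Fin n` corresponding to the 1-based index `k ∈ [1,n]`. -/
def vIdx (n : ℕ) [NeZero n] (k : ℕ) : Fin n :=
  ⟨(k - 1) % n, Nat.mod_lt _ (Nat.pos_of_ne_zero (NeZero.ne n))⟩

namespace BD

variable (n : ℕ) [NeZero n]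

/-- 1-based entry of a matrix. -/
def entM (A : Mat n) (i j : ℕ) : ℂ := A (vIdx n i) (vIdx n j)

/-- 1-based matrix unit `e_{ij}`. -/
def matE (i j : ℕ) : Mat n := Matrix.single (vIdx n i) (vIdx n j) 1

/-- The trace form `⟨A,B⟩ = Tr(AB)`. -/
def trF (A B : Mat n) : ℂ := (A * B).trace

/-- `ĥ_i = (1/n)·diag(n−i,…,n−i,−i,…,−i)` (first `i` entries `n−i`). -/
def hhat (i : ℕ) : Mat n :=
  Matrix.diagonal fun k => if (k : ℕ) < i then ((n : ℂ) - i) / n else -(i : ℂ) / n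

/-- The contribution of a tensor summand `A ⊗ B` of an R-matrix to the operator `R_+`,
i.e. `η ↦ ⟨A,η⟩ • B`, since `⟨⟨A,η⟩ • B, ζ⟩ = ⟨A ⊗ B, η ⊗ ζ⟩_⊗`. -/
def tAp (A B η : Mat n) : Mat n := trF n A η • B

/-- The contribution of a wedge `A ∧ B = A⊗B − B⊗A` to `R_+`. -/
def wAp (A B η : Mat n) : Mat n := tAp n A B η - tAp n B A η

variable (a b : ℕ)

/-- The contribution of the diagonal part `r_0` to `R_+` (for the BD triple `α ↦ β`,
written `a ↦ b`). -/
def Rplus0 (η : Mat n) : Mat n :=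
  (∑ i ∈ Finset.Icc 1 (n - 1), tAp n (hhat n i) (hhat n i) η)
    - (∑ i ∈ Finset.Icc 1 (n - 2), tAp n (hhat n (i + 1)) (hhat n i) η)
    + (if b = a + 1 then
        wAp n (hhat n a) (hhat n b) η + wAp n (hhat n (b - 1)) (hhat n a) η
          + wAp n (hhat n b) (hhat n (a + 1)) η
      else 0)

/-- The operator `R_+` associated with the standard R-matrix
`r_std = r_0 + Σ_{i<j} e_{ji} ⊗ e_{ij}`. -/
def RplusStd (η : Mat n) : Mat n :=
  Rplus0 n a b η +
    ∑ i ∈ Finset.Icc 1 n, ∑ j ∈ Finset.Icc 1 n,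
      (if i < j then tAp n (matE n j i) (matE n i j) η else 0)

/-- The operator `R_+` associated with the R-matrix
`r_{αβ} = r_std + e_{α+1,α} ⊗ e_{β,β+1} − e_{β,β+1} ⊗ e_{α+1,α}`. -/
def RplusAB (η : Mat n) : Mat n :=
  RplusStd n a b η + tAp n (matE n (a + 1) a) (matE n b (b + 1)) η
    - tAp n (matE n b (b + 1)) (matE n (a + 1) a) η

/-- Evaluation of a polynomial function at a matrix `X`. -/
def evalM (X : Mat n) (f : PolyFn n) : ℂ :=
  MvPolynomial.eval (fun p => X p.1 p.2) f

/-- The gradient `∇f(X)` with respect to the trace form: `(∇f(X))_{ij} = ∂f/∂x_{ji}(X)`. -/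
def gradM (f : PolyFn n) (X : Mat n) : Mat n :=
  Matrix.of fun i j => evalM n X (MvPolynomial.pderiv (j, i) f)

/-- The Sklyanin bracket associated with the operator `R`. -/
def skly (R : Mat n → Mat n) (f g : PolyFn n) (X : Mat n) : ℂ :=
  trF n (R (gradM n f X * X)) (gradM n g X * X)
    - trF n (R (X * gradM n f X)) (X * gradM n g X)

/-- The standard Sklyanin bracket `{·,·}_std`. -/
def brStd (f g : PolyFn n) (X : Mat n) : ℂ := skly n (RplusStd n a b) f g X

/-- The Sklyanin bracket `{·,·}_{αβ}`. -/
def brAB (f g : PolyFn n) (X : Mat n) : ℂ := skly n (RplusAB n a b) f g X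

/-- `f^{i←j}(X) = (∇f(X)·X)_{ij}`. -/
def supArr (f : PolyFn n) (i j : ℕ) (X : Mat n) : ℂ := entM n (gradM n f X * X) i j

/-- `f_{i←j}(X) = (X·∇f(X))_{ji}`. -/
def subArr (f : PolyFn n) (i j : ℕ) (X : Mat n) : ℂ := entM n (X * gradM n f X) j i

/-- The coordinate function `x_{ij}` (1-based) as a polynomial. -/
def xC (i j : ℕ) : PolyFn n := MvPolynomial.X (vIdx n i, vIdx n j)

/-- The determinant of an `s × s` submatrix of the matrix of variables, with (1-based)
row indices `r 0, …, r (s-1)` and column indices `c 0, …, c (s-1)`. -/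
def subDet (s : ℕ) (r c : ℕ → ℕ) : PolyFn n :=
  Matrix.det (Matrix.of fun p q : Fin s =>
    (MvPolynomial.X (vIdx n (r p), vIdx n (c q)) : PolyFn n))

/-- The size of the maximal contiguous square submatrix with upper-left corner `(i,j)`. -/
def msize (i j : ℕ) : ℕ := n + 1 - max i j

/-- The minor `f_{ij} = det X_{[i, min(n,n+i−j)]}^{[j, min(n,n+j−i)]}`. -/
def fMin (i j : ℕ) : PolyFn n :=
  subDet n (msize n i j) (fun p => i + p) (fun q => j + q)

/-- `f_{ij}^{→}` : the minor `f_{ij}` with its last column replaced by the next column. -/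
def fMinR (i j : ℕ) : PolyFn n :=
  subDet n (msize n i j) (fun p => i + p)
    (fun q => if q + 1 = msize n i j then j + msize n i j else j + q)

/-- `f_{ij}^{←}` : the minor `f_{ij}` with its first column replaced by the previous column. -/
def fMinL (i j : ℕ) : PolyFn n :=
  subDet n (msize n i j) (fun p => i + p) (fun q => if q = 0 then j - 1 else j + q)

/-- `f_{ij}^{↓}` : the minor `f_{ij}` with its last row replaced by the next row. -/
def fMinD (i j : ℕ) : PolyFn n :=
  subDet n (msize n i j)
    (fun p => if p + 1 = msize n i j then i + msize n i j else i + p) (fun q => j + q)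

/-- `f_{ij}^{↑}` : the minor `f_{ij}` with its first row replaced by the previous row. -/
def fMinU (i j : ℕ) : PolyFn n :=
  subDet n (msize n i j) (fun p => if p = 0 then i - 1 else i + p) (fun q => j + q)

/-- `θ_k = f_{n+k−α,k}·f_{1,β+1} − f_{n+k−α,k}^{→}·f_{1,β+1}^{←}`. -/
def theta (k : ℕ) : PolyFn n :=
  fMin n (n + k - a) k * fMin n 1 (b + 1) - fMinR n (n + k - a) k * fMinL n 1 (b + 1)

/-- `ψ_m = f_{m,n+m−β}·f_{α+1,1} − f_{m,n+m−β}^{↓}·f_{α+1,1}^{↑}`. -/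
def psi (m : ℕ) : PolyFn n :=
  fMin n m (n + m - b) * fMin n (a + 1) 1 - fMinD n m (n + m - b) * fMinU n (a + 1) 1

/-- The initial cluster functions `φ_{ij}`. -/
def phi (i j : ℕ) : PolyFn n :=
  if 1 ≤ j ∧ j ≤ a ∧ i = n + j - a then theta n a b j
  else if 1 ≤ i ∧ i ≤ b ∧ j = n + i - b then psi n a b i
  else fMin n i j

end BD

/-!
A summand `A ⊗ B` of `r` contributes `η ↦ ⟨A, η⟩ B` to `R_+`. The sum `Σ_{i<j} e_{ji} ⊗ e_{ij}`
thus contributes the strictly upper triangular part of `η`, and the two extra summands of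
`r_{αβ}` contribute `η_{α,α+1} e_{β,β+1} − η_{β+1,β} e_{α+1,α}`. The Cartan part `r_0` is built
from the diagonal matrices `ĥ_i`, so it contributes a diagonal matrix depending linearly on the
diagonal of `η` alone; it kills `Id` because every `ĥ_i` is traceless. The values on matrix
units and diagonal matrices are specializations of this formula.
-/

namespace Matrix

variable {ι α : Type*} [LinearOrder ι] [Zero α]

def strictUpper (A : Matrix ι ι α) : Matrix ι ι α := of fun k l => if k < l then A k l else 0

theorem strictUpper_single_of_lt {i j : ι} (h : i < j) (c : α) :
    strictUpper (single i j c) = single i j c := by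
  ext k l
  by_cases hk : i = k ∧ j = l
  · obtain ⟨rfl, rfl⟩ := hk
    simp [strictUpper, h]
  · simp [strictUpper, single_apply, hk]

theorem strictUpper_single_of_le {i j : ι} (h : j ≤ i) (c : α) :
    strictUpper (single i j c) = 0 := by
  ext k l
  by_cases hk : i = k ∧ j = l
  · obtain ⟨rfl, rfl⟩ := hk
    simp [strictUpper, h.not_gt]
  · simp [strictUpper, single_apply, hk]

theorem strictUpper_diagonal [DecidableEq ι] (d : ι → α) : strictUpper (diagonal d) = 0 := by
  ext k l
  simp +contextual [strictUpper, ne_of_lt]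

theorem sum_sum_ite_lt_single [Fintype ι] {β : Type*} [AddCommMonoid β] (A : Matrix ι ι β) :
    ∑ k, ∑ l, (if k < l then single k l (A k l) else 0) = strictUpper A := by
  conv_rhs => rw [matrix_eq_sum_single (strictUpper A)]
  simp only [strictUpper, of_apply]
  congr! 3 with k - l -
  split_ifs <;> simp

end Matrix

theorem Finset.sum_Icc_one_eq_sum_fin {M : Type*} [AddCommMonoid M] (n : ℕ) (f : ℕ → M) :
    ∑ i ∈ Icc 1 n, f i = ∑ k : Fin n, f (k + 1) := by
  rw [Fin.sum_univ_eq_sum_range (fun k => f (k + 1)), range_eq_Ico, sum_Ico_add' f, zero_add,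
    Ico_add_one_right_eq_Icc]

namespace BD

section Diagonal

variable {n : ℕ}

theorem trF_one (A : Mat n) : trF n A 1 = A.trace := by
  rw [trF, mul_one]

theorem trF_diagonal (d : Fin n → ℂ) (η : Mat n) :
    trF n (Matrix.diagonal d) η = ∑ k, d k * η k k := by
  simp [trF, Matrix.trace, Matrix.diagonal_mul]

variable (n) (a b : ℕ)

theorem isLinearMap_Rplus0 : IsLinearMap ℂ (Rplus0 n a b) := by
  constructor
  · intro x y
    simp only [Rplus0, wAp, tAp, trF, mul_add, Matrix.trace_add, add_smul, Finset.sum_add_distrib]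
    split_ifs <;> abel
  · intro c x
    simp only [Rplus0, wAp, tAp, trF, Matrix.mul_smul, Matrix.trace_smul, smul_eq_mul, mul_smul,
      smul_sub, smul_add, Finset.smul_sum]
    split_ifs
    · simp only [smul_add, smul_sub]
    · rw [smul_zero]

def Rplus0Diag (d : Fin n → ℂ) : Fin n → ℂ := (Rplus0 n a b (Matrix.diagonal d)).diag

theorem isLinearMap_Rplus0Diag : IsLinearMap ℂ (Rplus0Diag n a b) :=
  (Matrix.diagLinearMap (Fin n) ℂ ℂ ∘ₗ (isLinearMap_Rplus0 n a b).mk' _ ∘ₗ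
    Matrix.diagonalLinearMap (Fin n) ℂ ℂ).isLinear

variable {n}

theorem Rplus0_diagonal_diag (η : Mat n) :
    Rplus0 n a b (Matrix.diagonal η.diag) = Rplus0 n a b η := by
  simp [Rplus0, wAp, tAp, hhat, trF_diagonal]

theorem isDiag_Rplus0 (η : Mat n) : (Rplus0 n a b η).IsDiag := by
  intro k l hkl
  simp [Rplus0, wAp, tAp, hhat, Matrix.sum_apply, Matrix.diagonal_apply_ne _ hkl,
    apply_ite (f := fun M : Mat n => M k l)]

theorem Rplus0_eq_diagonal (η : Mat n) :
    Rplus0 n a b η = Matrix.diagonal (Rplus0Diag n a b η.diag) := by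
  rw [Rplus0Diag, Rplus0_diagonal_diag, (isDiag_Rplus0 a b η).diagonal_diag]

theorem Rplus0_eq_zero_of_diag_eq_zero {η : Mat n} (h : η.diag = 0) : Rplus0 n a b η = 0 := by
  rw [Rplus0_eq_diagonal, h, (isLinearMap_Rplus0Diag n a b).map_zero]
  exact Matrix.diagonal_zero

end Diagonal

variable {n : ℕ} [NeZero n]

theorem vIdx_val {k : ℕ} (h1 : 1 ≤ k) (h2 : k ≤ n) : (vIdx n k : ℕ) = k - 1 :=
  Nat.mod_eq_of_lt (by omega)

theorem vIdx_add_one (k : Fin n) : vIdx n (k + 1) = k :=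
  Fin.ext (vIdx_val (by omega) k.isLt)

theorem vIdx_lt_vIdx {i j : ℕ} (hi : 1 ≤ i) (hij : i < j) (hj : j ≤ n) :
    vIdx n i < vIdx n j := by
  rw [Fin.lt_def, vIdx_val hi (by omega), vIdx_val (by omega) hj]
  omega

theorem vIdx_inj {i j : ℕ} (hi : 1 ≤ i) (hi' : i ≤ n) (hj : 1 ≤ j) (hj' : j ≤ n) :
    vIdx n i = vIdx n j ↔ i = j := by
  rw [Fin.ext_iff, vIdx_val hi hi', vIdx_val hj hj']
  omega

theorem strictUpper_matE_of_lt {i j : ℕ} (hi : 1 ≤ i) (hij : i < j) (hj : j ≤ n) :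
    (matE n i j).strictUpper = matE n i j :=
  Matrix.strictUpper_single_of_lt (vIdx_lt_vIdx hi hij hj) 1

theorem strictUpper_matE_of_gt {i j : ℕ} (hj : 1 ≤ j) (hji : j < i) (hi : i ≤ n) :
    (matE n i j).strictUpper = 0 :=
  Matrix.strictUpper_single_of_le (vIdx_lt_vIdx hj hji hi).le 1

theorem diag_matE {i j : ℕ} (hij : vIdx n i ≠ vIdx n j) : (matE n i j).diag = 0 := by
  ext k
  simp [matE, Matrix.single_apply]
  omega

theorem trF_matE (i j : ℕ) (η : Mat n) : trF n (matE n j i) η = entM n η i j := by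
  simp [trF, matE, entM, Matrix.trace_single_mul]

theorem entM_matE {i j p q : ℕ} (hi : 1 ≤ i) (hi' : i ≤ n) (hj : 1 ≤ j) (hj' : j ≤ n)
    (hp : 1 ≤ p) (hp' : p ≤ n) (hq : 1 ≤ q) (hq' : q ≤ n) :
    entM n (matE n i j) p q = if i = p ∧ j = q then 1 else 0 := by
  simp [entM, matE, Matrix.single_apply, vIdx_inj hi hi' hp hp', vIdx_inj hj hj' hq hq']

theorem trace_hhat {i : ℕ} (hi : i ≤ n) : (hhat n i).trace = 0 := by
  have hn : (n : ℂ) ≠ 0 := Nat.cast_ne_zero.mpr (NeZero.ne n)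
  have entry (k : Fin n) : (if (k : ℕ) < i then ((n : ℂ) - i) / n else -(i : ℂ) / n)
      = (if (k : ℕ) < i then 1 else 0) - i / n := by
    split_ifs <;> field_simp
    ring
  simp only [hhat, Matrix.trace_diagonal, entry, Finset.sum_sub_distrib, Finset.sum_boole,
    Fin.card_filter_val_lt, min_eq_right hi, Finset.sum_const, Finset.card_univ, Fintype.card_fin,
    nsmul_eq_mul]
  field_simp
  ring

theorem Rplus0_one {a b : ℕ} (ha : a ≤ n) (hb : b ≤ n) : Rplus0 n a b 1 = 0 := by
  have vanish {i : ℕ} (hi : i ≤ n) (B : Mat n) : tAp n (hhat n i) B 1 = 0 := by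
    rw [tAp, trF_one, trace_hhat hi, zero_smul]
  have diag_sum : ∑ i ∈ Finset.Icc 1 (n - 1), tAp n (hhat n i) (hhat n i) 1 = 0 :=
    Finset.sum_eq_zero fun i hi => vanish (by simp at hi; omega) _
  have off_diag_sum : ∑ i ∈ Finset.Icc 1 (n - 2), tAp n (hhat n (i + 1)) (hhat n i) 1 = 0 :=
    Finset.sum_eq_zero fun i hi => vanish (by simp at hi; omega) _
  rw [Rplus0, diag_sum, off_diag_sum]
  split_ifs with hab
  · simp [wAp, vanish ha, vanish hb, vanish (show b - 1 ≤ n by omega),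
      vanish (show a + 1 ≤ n by omega)]
  · simp

theorem sum_tAp_matE_eq_strictUpper (η : Mat n) :
    ∑ i ∈ Finset.Icc 1 n, ∑ j ∈ Finset.Icc 1 n,
      (if i < j then tAp n (matE n j i) (matE n i j) η else 0) = η.strictUpper := by
  simp only [tAp, trF_matE]
  simp only [Finset.sum_Icc_one_eq_sum_fin, entM, matE, vIdx_add_one, Nat.add_lt_add_iff_right,
    Fin.val_fin_lt, Matrix.smul_single, smul_eq_mul, mul_one]
  exact Matrix.sum_sum_ite_lt_single η

theorem RplusAB_eq (a b : ℕ) (η : Mat n) :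
    RplusAB n a b η = η.strictUpper + Rplus0 n a b η
      + entM n η a (a + 1) • matE n b (b + 1) - entM n η (b + 1) b • matE n (a + 1) a := by
  rw [RplusAB, RplusStd, sum_tAp_matE_eq_strictUpper]
  simp only [tAp, trF_matE]
  abel

variable {a b : ℕ}

theorem RplusAB_matE (ha : 1 ≤ a) (hab : a < b) (hbn : b < n) {i j : ℕ} (hi : 1 ≤ i)
    (hi' : i ≤ n) (hj : 1 ≤ j) (hj' : j ≤ n) (hij : i ≠ j) :
    RplusAB n a b (matE n i j) = (matE n i j).strictUpper
      + (if i = a ∧ j = a + 1 then matE n b (b + 1) else 0)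
      - (if i = b + 1 ∧ j = b then matE n (a + 1) a else 0) := by
  have hdiag : (matE n i j).diag = 0 := diag_matE ((vIdx_inj hi hi' hj hj').not.mpr hij)
  rw [RplusAB_eq, Rplus0_eq_zero_of_diag_eq_zero a b hdiag,
    entM_matE hi hi' hj hj' ha (by omega) (by omega) (by omega),
    entM_matE hi hi' hj hj' (by omega) (by omega) (by omega) (by omega)]
  simp only [ite_smul, one_smul, zero_smul, add_zero]

theorem RplusAB_diagonal (ha : 1 ≤ a) (hab : a < b) (hbn : b < n) (d : Fin n → ℂ) :
    RplusAB n a b (Matrix.diagonal d) = Rplus0 n a b (Matrix.diagonal d) := by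
  have hα : vIdx n a ≠ vIdx n (a + 1) := (vIdx_lt_vIdx ha (by omega) (by omega)).ne
  have hβ : vIdx n (b + 1) ≠ vIdx n b := (vIdx_lt_vIdx (by omega) (by omega) hbn).ne'
  rw [RplusAB_eq, Matrix.strictUpper_diagonal, entM, entM, Matrix.diagonal_apply_ne _ hα,
    Matrix.diagonal_apply_ne _ hβ]
  simp

end BD

open BD in
theorem statement0_general (n a b : ℕ) [NeZero n] (ha : 1 ≤ a) (hab : a < b)
    (hb : b ≤ n - 1) :
    (∀ i j : ℕ, 1 ≤ i → i < j → j ≤ n → (i, j) ≠ (a, a + 1) →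
      RplusAB n a b (matE n i j) = matE n i j) ∧
    RplusAB n a b (matE n a (a + 1)) = matE n a (a + 1) + matE n b (b + 1) ∧
    (∀ i j : ℕ, 1 ≤ j → j < i → i ≤ n → (i, j) ≠ (b + 1, b) →
      RplusAB n a b (matE n i j) = 0) ∧
    RplusAB n a b (matE n (b + 1) b) = -matE n (a + 1) a ∧
    (∀ d : Fin n → ℂ, ∃ d' : Fin n → ℂ,
      RplusAB n a b (Matrix.diagonal d) = Matrix.diagonal d') ∧
    RplusAB n a b 1 = 0 ∧
    ∃ D : (Fin n → ℂ) → (Fin n → ℂ), IsLinearMap ℂ D ∧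
      ∀ η : Mat n, RplusAB n a b η =
        Matrix.of (fun k l => if k < l then η k l else 0)
          + Matrix.diagonal (D (Matrix.diag η))
          + entM n η a (a + 1) • matE n b (b + 1)
          - entM n η (b + 1) b • matE n (a + 1) a := by
  have hbn : b < n := by omega
  refine ⟨fun i j hi hij hj hne => ?_, ?_, fun i j hj hji hi hne => ?_, ?_, fun d => ?_, ?_,
    Rplus0Diag n a b, isLinearMap_Rplus0Diag n a b, fun η => ?_⟩
  · rw [RplusAB_matE ha hab hbn hi (by omega) (by omega) hj hij.ne,
      strictUpper_matE_of_lt hi hij hj, if_neg (by simpa using hne), if_neg (by omega)]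
    simp
  · rw [RplusAB_matE ha hab hbn ha (by omega) (by omega) (by omega) (by omega),
      strictUpper_matE_of_lt ha (by omega) (by omega), if_pos ⟨rfl, rfl⟩, if_neg (by omega)]
    simp
  · rw [RplusAB_matE ha hab hbn (by omega) hi hj (by omega) hji.ne',
      strictUpper_matE_of_gt hj hji hi, if_neg (by omega), if_neg (by simpa using hne)]
    simp
  · rw [RplusAB_matE ha hab hbn (by omega) (by omega) (by omega) (by omega) (by omega),
      strictUpper_matE_of_gt (by omega) (by omega) (by omega), if_neg (by omega),
      if_pos ⟨rfl, rfl⟩]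
    simp
  · exact ⟨_, (RplusAB_diagonal ha hab hbn d).trans (isDiag_Rplus0 a b _).diagonal_diag.symm⟩
  · rw [← Matrix.diagonal_one, RplusAB_diagonal ha hab hbn, Matrix.diagonal_one,
      Rplus0_one (by omega) (by omega)]
  · rw [RplusAB_eq, Rplus0_eq_diagonal]
    rfl

open BD in
/-- description of the operator `R_+` for `r_{αβ}` on matrix units,
on diagonal matrices, and the resulting general formula. -/
theorem statement0 (n a b : ℕ) [NeZero n] (hn : 3 ≤ n) (ha : 1 ≤ a) (hab : a < b)
    (hb : b ≤ n - 1) :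
    (∀ i j : ℕ, 1 ≤ i → i < j → j ≤ n → (i, j) ≠ (a, a + 1) →
      RplusAB n a b (matE n i j) = matE n i j) ∧
    RplusAB n a b (matE n a (a + 1)) = matE n a (a + 1) + matE n b (b + 1) ∧
    (∀ i j : ℕ, 1 ≤ j → j < i → i ≤ n → (i, j) ≠ (b + 1, b) →
      RplusAB n a b (matE n i j) = 0) ∧
    RplusAB n a b (matE n (b + 1) b) = -matE n (a + 1) a ∧
    (∀ d : Fin n → ℂ, ∃ d' : Fin n → ℂ,
      RplusAB n a b (Matrix.diagonal d) = Matrix.diagonal d') ∧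
    RplusAB n a b 1 = 0 ∧
    ∃ D : (Fin n → ℂ) → (Fin n → ℂ), IsLinearMap ℂ D ∧
      ∀ η : Mat n, RplusAB n a b η =
        Matrix.of (fun k l => if k < l then η k l else 0)
          + Matrix.diagonal (D (Matrix.diag η))
          + entM n η a (a + 1) • matE n b (b + 1)
          - entM n η (b + 1) b • matE n (a + 1) a :=
  statement0_general n a b ha hab hb
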